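/- arXiv:math/0412235 — 4 statements merged into one kernel-verified Lean document; each statement's English description precedes it below -/
import Mathlib

section
/- Let g ∈ ℂ[x₁,…,x_m] be weighted homogeneous of degree d with respect to weights α₁,…,α_m, let β ∈ ℕ^m, P = x^β, and fix an index i. Set dA_β := Σⱼ αⱼ(βⱼ+1). Then Σ_{j≠i} αⱼ·( (∂g/∂xⱼ)·(∂(xⱼP)/∂xᵢ) − (∂g/∂xᵢ)·(∂(xⱼP)/∂xⱼ) ) = d·g·(∂P/∂xᵢ) − (dA_β − αᵢ)·P·(∂g/∂xᵢ) as polynomials. -/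
/-!
Hypothesis `hg` makes `g` weighted homogeneous of degree `d` (compare the coefficients of
`g(λ^α x) = λ^d g(x)` at `λ = 2`), and `P = x^β` is weighted homogeneous of degree `Σ αⱼ βⱼ`.
The summand for `j = i` vanishes, so the sum may run over all `j`. Expanding
`∂ᵢ(xⱼP) = δᵢⱼ P + xⱼ ∂ᵢP` and `∂ⱼ(xⱼP) = P + xⱼ ∂ⱼP`, the weighted Euler identity
`Σ αⱼ xⱼ ∂ⱼ f = (deg f) f`, applied to `g` and to `P`, evaluates both halves of the sum.
-/

open MvPolynomial

namespace MvPolynomial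

section Scaling

variable {R σ : Type*} [CommRing R]

theorem coeff_bind₁_C_pow_mul_X (w : σ → ℕ) (c : R) (φ : MvPolynomial σ R) (s : σ →₀ ℕ) :
    coeff s (bind₁ (fun j => C (c ^ w j) * X j) φ) = c ^ Finsupp.weight w s * coeff s φ := by
  classical
  induction φ using MvPolynomial.induction_on' with
  | monomial u a =>
    have hprod : ∏ j ∈ u.support, (c ^ w j) ^ u j = c ^ Finsupp.weight w u := by
      simp only [← pow_mul, Finset.prod_pow_eq_pow_sum, Finsupp.weight_apply, Finsupp.sum,
        smul_eq_mul, mul_comm]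
    simp only [bind₁_monomial, mul_pow, Finset.prod_mul_distrib, ← map_pow, ← map_prod,
      prod_X_pow_eq_monomial, hprod, C_mul_monomial, mul_one, coeff_monomial]
    split_ifs with h
    · rw [h, mul_comm]
    · rw [mul_zero]
  | add p q hp hq => simp only [map_add, coeff_add, hp, hq, mul_add]

theorem isWeightedHomogeneous_of_eval_pow_weight_mul [IsDomain R] [CharZero R] {w : σ → ℕ}
    {n : ℕ} {φ : MvPolynomial σ R}
    (h : ∀ (c : R) (x : σ → R), eval (fun j => c ^ w j * x j) φ = c ^ n * eval x φ) :
    φ.IsWeightedHomogeneous w n := by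
  intro s hs
  have hscale : bind₁ (fun j => C ((2 : R) ^ w j) * X j) φ = C (2 ^ n) * φ :=
    funext fun x => by
      rw [eval_mul, eval_C, ← h]
      exact (eval₂Hom_bind₁ (RingHom.id R) x _ φ).trans (by simp)
  have hcoeff := congrArg (coeff s) hscale
  rw [coeff_bind₁_C_pow_mul_X, coeff_C_mul] at hcoeff
  exact Nat.pow_right_injective le_rfl (by exact_mod_cast mul_right_cancel₀ hs hcoeff)

end Scaling

section Euler

variable {R σ : Type*} [CommRing R] [Fintype σ] {w : σ → ℕ} {n : ℕ} {φ : MvPolynomial σ R}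

theorem IsWeightedHomogeneous.sum_weight_pderiv_X_mul (h : φ.IsWeightedHomogeneous w n) :
    ∑ j, w j • pderiv j (X j * φ) = (∑ j, w j + n) • φ := by
  simp only [Derivation.leibniz, pderiv_X_self, smul_eq_mul, mul_one, smul_add,
    Finset.sum_add_distrib, h.sum_weight_X_mul_pderiv, Finset.sum_smul, add_smul, add_comm]

theorem IsWeightedHomogeneous.sum_weight_pderiv_mul_pderiv_X_mul
    (h : φ.IsWeightedHomogeneous w n) (i : σ) (ψ : MvPolynomial σ R) :
    ∑ j, w j • (pderiv j φ * pderiv i (X j * ψ)) =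
      n • φ * pderiv i ψ + w i • pderiv i φ * ψ := by
  classical
  have euler : ∑ j, w j • (pderiv j φ * (X j * pderiv i ψ)) = n • φ * pderiv i ψ := by
    rw [← h.sum_weight_X_mul_pderiv, Finset.sum_mul]
    exact Finset.sum_congr rfl fun j _ => by ring
  simp only [Derivation.leibniz, pderiv_X, smul_eq_mul, mul_add, smul_add, Finset.sum_add_distrib,
    euler, Pi.single_apply, mul_ite, mul_one, mul_zero, smul_ite, smul_zero, Finset.sum_ite_eq',
    Finset.mem_univ, if_true, smul_mul_assoc]

end Euler

end MvPolynomial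

theorem key_identity_general (m d : ℕ) (α : Fin m → ℕ)
    (g : MvPolynomial (Fin m) ℂ)
    (hg : ∀ (lam : ℂ) (x : Fin m → ℂ),
      eval (fun j => lam ^ (α j) * x j) g = lam ^ d * eval x g)
    (β : Fin m → ℕ) (P : MvPolynomial (Fin m) ℂ) (hP : P = ∏ j, X j ^ β j)
    (i : Fin m) :
    ∑ j ∈ Finset.univ \ {i}, C ((α j : ℂ)) *
        (pderiv j g * pderiv i (X j * P) - pderiv i g * pderiv j (X j * P)) =
      C (d : ℂ) * g * pderiv i P -
        C ((∑ j, (α j : ℂ) * ((β j : ℂ) + 1)) - (α i : ℂ)) * P * pderiv i g := by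
  replace hg : g.IsWeightedHomogeneous α d := isWeightedHomogeneous_of_eval_pow_weight_mul hg
  replace hP : P.IsWeightedHomogeneous α (∑ j, β j • α j) :=
    hP ▸ IsWeightedHomogeneous.prod _ _ _ fun j _ => (isWeightedHomogeneous_X ℂ α j).pow (β j)
  have hpair : ∑ j, C (α j : ℂ) * (pderiv j g * pderiv i (X j * P)) =
      C (d : ℂ) * g * pderiv i P + C (α i : ℂ) * pderiv i g * P := by
    simpa only [C_mul', Nat.cast_smul_eq_nsmul, smul_mul_assoc]
      using hg.sum_weight_pderiv_mul_pderiv_X_mul i P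
  have hdeg : ∑ j, (α j : ℂ) * ((β j : ℂ) + 1) = ((∑ j, α j + ∑ j, β j • α j : ℕ) : ℂ) := by
    push_cast [smul_eq_mul]
    rw [← Finset.sum_add_distrib]
    exact Finset.sum_congr rfl fun j _ => by ring
  have hdiag : ∑ j, C (α j : ℂ) * (pderiv i g * pderiv j (X j * P)) =
      C (∑ j, (α j : ℂ) * ((β j : ℂ) + 1)) * P * pderiv i g := by
    calc _ = pderiv i g * ∑ j, α j • pderiv j (X j * P) := by
          rw [Finset.mul_sum]
          exact Finset.sum_congr rfl fun j _ => by rw [C_mul', Nat.cast_smul_eq_nsmul]; ring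
      _ = _ := by
          rw [hP.sum_weight_pderiv_X_mul, hdeg, mul_assoc, C_mul', Nat.cast_smul_eq_nsmul]
          ring
  rw [Finset.sum_subset Finset.sdiff_subset fun j _ hj => by simp_all]
  simp only [mul_sub, Finset.sum_sub_distrib, hpair, hdiag, map_sub]
  ring

/-- The key polynomial identity for the reduction algorithm in Brieskorn modules:
for `g` weighted homogeneous of degree `d` with weights `α`, `P = x^β` and an index `i`,
`Σ_{j≠i} αⱼ·((∂g/∂xⱼ)·(∂(xⱼP)/∂xᵢ) − (∂g/∂xᵢ)·(∂(xⱼP)/∂xⱼ))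
  = d·g·(∂P/∂xᵢ) − (dA_β − αᵢ)·P·(∂g/∂xᵢ)` where `dA_β = Σⱼ αⱼ(βⱼ+1)`. -/
theorem key_identity (m d : ℕ) (α : Fin m → ℕ) (hα : ∀ j, 0 < α j)
    (g : MvPolynomial (Fin m) ℂ)
    (hg : ∀ (lam : ℂ) (x : Fin m → ℂ),
      eval (fun j => lam ^ (α j) * x j) g = lam ^ d * eval x g)
    (β : Fin m → ℕ) (P : MvPolynomial (Fin m) ℂ) (hP : P = ∏ j, X j ^ β j)
    (i : Fin m) :
    ∑ j ∈ Finset.univ \ {i}, C ((α j : ℂ)) *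
        (pderiv j g * pderiv i (X j * P) - pderiv i g * pderiv j (X j * P)) =
      C (d : ℂ) * g * pderiv i P -
        C ((∑ j, (α j : ℂ) * ((β j : ℂ) + 1)) - (α i : ℂ)) * P * pderiv i g :=
  key_identity_general m d α g hg β P hP i
end

section
/- Let f ∈ ℂ[x₁,…,x_m] have finite-dimensional Milnor algebra V = ℂ[x]/J where J is the Jacobian ideal. A complex number c is an eigenvalue of the multiplication-by-f endomorphism A_f : V → V if and only if c is a critical value of f, i.e. there exists a point p ∈ ℂ^m with ∂f/∂xᵢ(p) = 0 for all i and f(p) = c. -/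
/-!
In a finite-dimensional algebra, multiplication by `f - c` is injective iff it is bijective, so
`c` is an eigenvalue of multiplication by `f` on `V = ℂ[x]/J` iff `f - c` is not a unit in `V`,
i.e. iff the ideal `J + (f - c)` is proper. By the weak Nullstellensatz this happens iff
`J + (f - c)` has a common zero in `ℂ^m`, that is, a critical point `p` of `f` with `f p = c`.
-/

open MvPolynomial

theorem Module.End.hasEigenvalue_mulLeft_iff {K A : Type*} [Field K] [Ring A] [Algebra K A]
    [FiniteDimensional K A] (a : A) (c : K) :
    Module.End.HasEigenvalue (LinearMap.mulLeft K a : Module.End K A) c ↔ c ∈ spectrum K a := by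
  rw [hasEigenvalue_iff_mem_spectrum, spectrum.mem_iff, spectrum.mem_iff,
    ← Algebra.lmul_isUnit_iff (R := K) (A := A), map_sub, AlgHom.commutes]
  rfl

theorem Ideal.Quotient.isUnit_mk_iff_span_singleton_sup_eq_top {R : Type*} [CommRing R]
    (J : Ideal R) (x : R) :
    IsUnit (Ideal.Quotient.mk J x) ↔ Ideal.span {x} ⊔ J = ⊤ := by
  rw [← Ideal.span_singleton_eq_top, ← Set.image_singleton, ← Ideal.map_span,
    ← Ideal.comap_eq_top_iff (f := Ideal.Quotient.mk J),
    Ideal.comap_map_of_surjective _ Ideal.Quotient.mk_surjective, ← RingHom.ker_eq_comap_bot,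
    Ideal.mk_ker]

theorem MvPolynomial.zeroLocus_nonempty_iff {σ k K : Type*} [Field k] [Field K] [Algebra k K]
    [IsAlgClosed K] [Finite σ] {I : Ideal (MvPolynomial σ k)} :
    (zeroLocus K I).Nonempty ↔ I ≠ ⊤ := by
  refine ⟨?_, fun hI => ?_⟩
  · rintro ⟨p, hp⟩ rfl
    simp at hp
  · by_contra h
    rw [Set.not_nonempty_iff_eq_empty] at h
    apply hI
    rw [← Ideal.radical_eq_top, ← vanishingIdeal_zeroLocus_eq_radical (K := K), h,
      vanishingIdeal_empty]

/-- `c` is an eigenvalue of the multiplication-by-`f` endomorphism of the Milnor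
algebra `V = ℂ[x]/J` iff `c` is a critical value of `f`. -/
theorem eigenvalue_iff_critical_value (m : ℕ) (f : MvPolynomial (Fin m) ℂ)
    (J : Ideal (MvPolynomial (Fin m) ℂ))
    (hJ : J = Ideal.span (Set.range fun i => pderiv i f))
    [FiniteDimensional ℂ (MvPolynomial (Fin m) ℂ ⧸ J)] (c : ℂ) :
    Module.End.HasEigenvalue
        (LinearMap.mulLeft ℂ (Ideal.Quotient.mk J f) :
          Module.End ℂ (MvPolynomial (Fin m) ℂ ⧸ J)) c ↔
      ∃ p : Fin m → ℂ, (∀ i, eval p (pderiv i f) = 0) ∧ eval p f = c := by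
  subst hJ
  rw [Module.End.hasEigenvalue_mulLeft_iff, spectrum.mem_iff, ← Ideal.Quotient.mk_algebraMap,
    ← map_sub, Ideal.Quotient.isUnit_mk_iff_span_singleton_sup_eq_top, ← Ideal.span_insert,
    ← ne_eq, ← zeroLocus_nonempty_iff (K := ℂ), zeroLocus_span]
  simp only [Set.Nonempty, Set.mem_ofPred_eq, Set.forall_mem_insert, Set.forall_mem_range,
    aeval_eq_eval, map_sub, algebraMap_eq, eval_C, sub_eq_zero, eq_comm (a := c), and_comm]
end

section
/- Let g ∈ ℂ[x₁,…,x_{n+1}] be a polynomial with finite-dimensional Milnor algebra of dimension μ, let d ≥ 2 and c ∈ ℂ with c ≠ 0. Then the polynomial G = g − c·x₀^d ∈ ℂ[x₀,x₁,…,x_{n+1}] has finite-dimensional Milnor algebra of dimension μ·(d−1). -/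
/-!
Since `∂G/∂x₀ = -c·d·x₀^(d-1)` with `c·d` a unit and `∂G/∂xᵢ = ∂g/∂xᵢ`, the Jacobian ideal of `G`
is `J(g)·ℂ[x₀, x] + (x₀^(d-1))`. Reading `ℂ[x₀, x]` as `ℂ[x][x₀]`, the Milnor algebra of `G` is
`(ℂ[x] ⧸ J(g))[x₀] ⧸ (x₀^(d-1))`, a free module of rank `d - 1` over the Milnor algebra of `g`.
-/

open MvPolynomial
open scoped Polynomial

section PolynomialQuotient

variable (R : Type*) {A : Type*} [CommRing R] [CommRing A] [Algebra R A] (I : Ideal A) (f : A[X])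

noncomputable def Polynomial.mapMkAdjoinRoot : A[X] →ₐ[R] AdjoinRoot (f.map (Ideal.Quotient.mk I)) :=
  ((AdjoinRoot.mkₐ _).restrictScalars R).comp (Polynomial.mapAlgHom (Ideal.Quotient.mkₐ R I))

theorem Polynomial.mapMkAdjoinRoot_surjective :
    Function.Surjective (Polynomial.mapMkAdjoinRoot R I f) :=
  AdjoinRoot.mk_surjective.comp (Polynomial.map_surjective _ Ideal.Quotient.mk_surjective)

theorem Polynomial.ker_mapMkAdjoinRoot :
    RingHom.ker (Polynomial.mapMkAdjoinRoot R I f) = Ideal.span {f} ⊔ I.map Polynomial.C := by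
  have hsurj : Function.Surjective (Polynomial.mapRingHom (Ideal.Quotient.mk I)) :=
    Polynomial.map_surjective _ Ideal.Quotient.mk_surjective
  have hcomap := Ideal.comap_map_of_surjective _ hsurj (Ideal.span {f})
  rw [Ideal.map_span, Set.image_singleton, ← RingHom.ker_eq_comap_bot, Polynomial.ker_mapRingHom,
    Ideal.mk_ker] at hcomap
  rw [← hcomap]
  ext p
  simp only [RingHom.mem_ker, Polynomial.mapMkAdjoinRoot, AlgHom.comp_apply,
    AlgHom.restrictScalars_apply, AdjoinRoot.coe_mkₐ, AdjoinRoot.mk_eq_zero, Ideal.mem_comap,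
    Ideal.mem_span_singleton]
  exact Iff.rfl

noncomputable def Polynomial.quotientSpanSupMapCAlgEquiv :
    (A[X] ⧸ (Ideal.span {f} ⊔ I.map Polynomial.C)) ≃ₐ[R]
      AdjoinRoot (f.map (Ideal.Quotient.mk I)) :=
  (Ideal.quotientEquivAlgOfEq R (Polynomial.ker_mapMkAdjoinRoot R I f).symm).trans <|
    Ideal.quotientKerAlgEquivOfSurjective (Polynomial.mapMkAdjoinRoot_surjective R I f)

end PolynomialQuotient

section OptionEquivLeft

variable {R σ : Type*} [CommRing R]

theorem MvPolynomial.optionEquivLeft_comp_rename_some :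
    ((optionEquivLeft R σ : MvPolynomial (Option σ) R →+* (MvPolynomial σ R)[X]).comp
      (rename some : MvPolynomial σ R →ₐ[R] _)) = Polynomial.C := by
  ext <;> simp

theorem MvPolynomial.map_optionEquivLeft_map_rename_some_sup (I : Ideal (MvPolynomial σ R))
    (m : ℕ) :
    (I.map (rename some) ⊔ Ideal.span {X none ^ m}).map (optionEquivLeft R σ) =
      Ideal.span {Polynomial.X ^ m} ⊔ I.map Polynomial.C := by
  rw [Ideal.map_sup, Ideal.map_span, Set.image_singleton, map_pow, optionEquivLeft_X_none,
    sup_comm, ← optionEquivLeft_comp_rename_some, ← Ideal.map_map]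
  rfl

noncomputable def MvPolynomial.quotientMapRenameSomeSupAlgEquiv (I : Ideal (MvPolynomial σ R))
    (m : ℕ) :
    (MvPolynomial (Option σ) R ⧸ (I.map (rename some) ⊔ Ideal.span {X none ^ m})) ≃ₐ[R]
      AdjoinRoot (Polynomial.X ^ m : (MvPolynomial σ R ⧸ I)[X]) :=
  (Ideal.quotientEquivAlg _ _ (optionEquivLeft R σ)
    (map_optionEquivLeft_map_rename_some_sup I m).symm).trans <|
    (Polynomial.quotientSpanSupMapCAlgEquiv R I _).trans <|
      AdjoinRoot.algEquivOfEq R _ _ (by simp)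

end OptionEquivLeft

section FiniteAdjoinRoot

variable (K : Type*) {S : Type*} [Field K] [CommRing S] [Algebra K S] [Module.Finite K S]

theorem Polynomial.Monic.finite_adjoinRoot_of_finite {g : S[X]} (hg : g.Monic) :
    Module.Finite K (AdjoinRoot g) :=
  have := hg.finite_adjoinRoot
  Module.Finite.trans S _

theorem AdjoinRoot.finrank_X_pow (m : ℕ) :
    Module.finrank K (AdjoinRoot (Polynomial.X ^ m : S[X])) = Module.finrank K S * m := by
  rcases subsingleton_or_nontrivial S with hS | hS
  · have : Subsingleton (AdjoinRoot (Polynomial.X ^ m : S[X])) :=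
      AdjoinRoot.mk_surjective.subsingleton
    simp [Module.finrank_zero_of_subsingleton]
  · have hmonic := Polynomial.monic_X_pow (R := S) m
    have := hmonic.free_adjoinRoot
    rw [← Module.finrank_mul_finrank K S, (AdjoinRoot.powerBasis' hmonic).finrank,
      AdjoinRoot.powerBasis'_dim, Polynomial.natDegree_X_pow]

end FiniteAdjoinRoot

section JacobianIdeal

variable {R σ : Type*} [CommRing R]

noncomputable def MvPolynomial.jacobianIdeal (f : MvPolynomial σ R) : Ideal (MvPolynomial σ R) :=
  Ideal.span (Set.range fun i => pderiv i f)

variable (g : MvPolynomial σ R) (c : R) (d : ℕ)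

theorem MvPolynomial.pderiv_some_rename_some_sub_C_mul_X_none_pow (i : σ) :
    pderiv (some i) (rename some g - C c * X none ^ d) = rename some (pderiv i g) := by
  rw [map_sub, pderiv_rename (Option.some_injective _), pderiv_C_mul, Derivation.leibniz_pow,
    pderiv_X_of_ne (Option.some_ne_none i).symm]
  simp

theorem MvPolynomial.pderiv_none_rename_some_sub_C_mul_X_none_pow :
    pderiv none (rename some g - C c * X none ^ d) = -(C (c * d) * X none ^ (d - 1)) := by
  have hrename : pderiv none (rename some g) = 0 :=
    pderiv_eq_zero_of_notMem_vars fun h => by classical simpa using vars_rename some g h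
  rw [map_sub, hrename, zero_sub, pderiv_C_mul, Derivation.leibniz_pow, pderiv_X_self]
  simp only [nsmul_eq_mul, smul_eq_mul, mul_one, map_mul, map_natCast]
  ring

theorem MvPolynomial.jacobianIdeal_rename_some_sub_C_mul_X_none_pow (hcd : IsUnit (c * d)) :
    jacobianIdeal (rename some g - C c * X none ^ d) =
      (jacobianIdeal g).map (rename some) ⊔ Ideal.span {X none ^ (d - 1)} := by
  rw [jacobianIdeal, Option.range_eq, Ideal.span_insert,
    pderiv_none_rename_some_sub_C_mul_X_none_pow, Ideal.span_singleton_neg,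
    Ideal.span_singleton_mul_left_unit (hcd.map C), sup_comm, jacobianIdeal, Ideal.map_span,
    ← Set.range_comp]
  simp only [Function.comp_def, pderiv_some_rename_some_sub_C_mul_X_none_pow]

end JacobianIdeal

/-- If `g` has finite dimensional Milnor algebra of dimension `μ`, `d ≥ 2` and `c ≠ 0`,
then `G = g − c·x₀^d` has finite dimensional Milnor algebra of dimension `μ·(d−1)`.
Here `x₀` is the variable indexed by `none`. -/
theorem milnor_number_of_cone (n d : ℕ) (hd : 2 ≤ d) (c : ℂ) (hc : c ≠ 0)
    (g : MvPolynomial (Fin (n + 1)) ℂ)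
    (Jg : Ideal (MvPolynomial (Fin (n + 1)) ℂ))
    (hJg : Jg = Ideal.span (Set.range fun i => pderiv i g))
    [FiniteDimensional ℂ (MvPolynomial (Fin (n + 1)) ℂ ⧸ Jg)]
    (G : MvPolynomial (Option (Fin (n + 1))) ℂ)
    (hG : G = rename some g - C c * X none ^ d)
    (JG : Ideal (MvPolynomial (Option (Fin (n + 1))) ℂ))
    (hJG : JG = Ideal.span (Set.range fun j => pderiv j G)) :
    FiniteDimensional ℂ (MvPolynomial (Option (Fin (n + 1))) ℂ ⧸ JG) ∧
      Module.finrank ℂ (MvPolynomial (Option (Fin (n + 1))) ℂ ⧸ JG) =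
        Module.finrank ℂ (MvPolynomial (Fin (n + 1)) ℂ ⧸ Jg) * (d - 1) := by
  have hcd : IsUnit (c * d) := (mul_ne_zero hc (Nat.cast_ne_zero.2 (by omega))).isUnit
  have hJG_eq : JG = Jg.map (rename some) ⊔ Ideal.span {X none ^ (d - 1)} := by
    rw [hJG, hG, hJg]
    exact jacobianIdeal_rename_some_sub_C_mul_X_none_pow g c d hcd
  let e := (Ideal.quotientEquivAlgOfEq ℂ hJG_eq).trans
    (quotientMapRenameSomeSupAlgEquiv Jg (d - 1))
  have := Polynomial.Monic.finite_adjoinRoot_of_finite ℂ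
    (Polynomial.monic_X_pow (R := MvPolynomial (Fin (n + 1)) ℂ ⧸ Jg) (d - 1))
  exact ⟨Module.Finite.equiv e.symm.toLinearEquiv,
    e.toLinearEquiv.finrank_eq.trans (AdjoinRoot.finrank_X_pow ℂ (d - 1))⟩
end

section
/- Let f ∈ ℂ[x] be a polynomial of degree d ≥ 2 in one variable with derivative f'. Then ℂ[x] decomposes as the direct sum of ℂ[f]-modules ℂ[x] = ℂ[f]·1 ⊕ ℂ[f]·x ⊕ ⋯ ⊕ ℂ[f]·x^{d−2} ⊕ f'·ℂ[f]. In particular every p ∈ ℂ[x] can be written uniquely as p = Σ_{i=0}^{d−2} q_i(f)·x^i + q(f)·f' with q_i, q ∈ ℂ[t]. -/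
/-!
If `deg f = d` and `deg bᵢ = i` for `i < d`, the products `fᵏ · bᵢ` have the pairwise distinct
degrees `d k + i`, one for every natural number. Distinct degrees force a vanishing sum
`∑ qᵢ(f) · bᵢ` to have all `qᵢ = 0`, and a family with one polynomial of each degree spans
`ℂ[x]` over `ℂ`. The theorem is the case `bᵢ = xⁱ` for `i ≤ d - 2` and `b_{d-1} = f'`, whose
degree is `d - 1` in characteristic zero.
-/

open Polynomial
open scoped Function

namespace Polynomial

section CommRing

variable {R : Type*} [CommRing R] {ι : Type*} [Fintype ι]

noncomputable def sumCompMul (f : R[X]) (b : ι → R[X]) : (ι → R[X]) →ₗ[R] R[X] where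
  toFun g := ∑ i, (g i).comp f * b i
  map_add' g h := by simp only [Pi.add_apply, add_comp, add_mul, Finset.sum_add_distrib]
  map_smul' c g := by simp only [Pi.smul_apply, smul_comp, smul_mul_assoc, Finset.smul_sum,
    RingHom.id_apply]

theorem sumCompMul_apply (f : R[X]) (b : ι → R[X]) (g : ι → R[X]) :
    sumCompMul f b g = ∑ i, (g i).comp f * b i := rfl

theorem sumCompMul_snoc {n : ℕ} (f : R[X]) (b : Fin n → R[X]) (c : R[X]) (g : Fin n → R[X])
    (q : R[X]) : sumCompMul f (Fin.snoc b c) (Fin.snoc g q) =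
      ∑ i, (g i).comp f * b i + q.comp f * c := by
  simp [sumCompMul_apply, Fin.sum_univ_castSucc]

theorem sumCompMul_single [DecidableEq ι] (f : R[X]) (b : ι → R[X]) (j : ι) (q : R[X]) :
    sumCompMul f b (Pi.single j q) = q.comp f * b j := by
  rw [sumCompMul_apply, Finset.sum_eq_single j (fun i _ hij => by simp [hij]) (by simp)]
  simp

variable [NoZeroDivisors R]

theorem degree_comp_mul {f g b : R[X]} {d r : ℕ} (hf : f.natDegree = d) (hd : 0 < d)
    (hb : b.degree = r) (hg : g ≠ 0) : (g.comp f * b).degree = ↑(g.natDegree * d + r) := by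
  have hf' : 0 < f.degree := natDegree_pos_iff_degree_pos.mp (hf ▸ hd)
  rw [degree_mul, degree_comp hf', degree_eq_natDegree hg,
    degree_eq_natDegree (ne_zero_of_degree_gt hf'), hf, hb]
  norm_cast

theorem sumCompMul_injective {f : R[X]} {d : ℕ} {b : Fin d → R[X]} (hf : f.natDegree = d)
    (hd : 0 < d) (hb : ∀ i, (b i).degree = i) : Function.Injective (sumCompMul f b) := by
  rw [← LinearMap.ker_eq_bot, LinearMap.ker_eq_bot']
  intro g hg
  have hdisjoint : Set.Pairwise {i | i ∈ Finset.univ ∧ (g i).comp f * b i ≠ 0}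
      (Ne on fun i => ((g i).comp f * b i).degree) := by
    rintro i ⟨-, hi⟩ j ⟨-, hj⟩ hij hdeg
    have hgi : g i ≠ 0 := by rintro h; simp [h] at hi
    have hgj : g j ≠ 0 := by rintro h; simp [h] at hj
    dsimp only at hdeg
    rw [degree_comp_mul hf hd (hb i) hgi, degree_comp_mul hf hd (hb j) hgj, Nat.cast_inj] at hdeg
    have hres := congrArg (· % d) hdeg
    simp only [Nat.mul_add_mod_self_right, Nat.mod_eq_of_lt i.isLt, Nat.mod_eq_of_lt j.isLt] at hres
    exact hij (Fin.ext hres)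
  have hsup := degree_sum_eq_of_disjoint _ _ hdisjoint
  rw [← sumCompMul_apply, hg, degree_zero, eq_comm, Finset.sup_eq_bot_iff] at hsup
  funext i
  by_contra hgi
  have hbot := hsup i (Finset.mem_univ i)
  rw [degree_comp_mul hf hd (hb i) hgi] at hbot
  exact WithBot.natCast_ne_bot _ hbot

end CommRing

section Field

variable {K : Type*} [Field K] {d : ℕ}

noncomputable def Sequence.powMul (f : K[X]) (b : Fin d → K[X]) (hf : f.natDegree = d)
    (hd : 0 < d) (hb : ∀ i, (b i).degree = i) : Sequence K where
  elems' n := f ^ (n / d) * b ⟨n % d, Nat.mod_lt n hd⟩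
  degree_eq' n := by
    rw [← X_pow_comp, degree_comp_mul hf hd (hb _) (pow_ne_zero _ X_ne_zero), natDegree_X_pow,
      Nat.div_add_mod']

theorem sumCompMul_surjective {f : K[X]} {b : Fin d → K[X]} (hf : f.natDegree = d)
    (hd : 0 < d) (hb : ∀ i, (b i).degree = i) : Function.Surjective (sumCompMul f b) := by
  let S := Sequence.powMul f b hf hd hb
  rw [← LinearMap.range_eq_top, eq_top_iff,
    ← S.span fun n => isUnit_iff_ne_zero.mpr (leadingCoeff_ne_zero.mpr (S.ne_zero n)),
    Submodule.span_le]
  rintro _ ⟨n, rfl⟩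
  exact ⟨Pi.single _ (X ^ (n / d)), by rw [sumCompMul_single, X_pow_comp]; rfl⟩

theorem sumCompMul_bijective {f : K[X]} {b : Fin d → K[X]} (hf : f.natDegree = d)
    (hd : 0 < d) (hb : ∀ i, (b i).degree = i) : Function.Bijective (sumCompMul f b) :=
  ⟨sumCompMul_injective hf hd hb, sumCompMul_surjective hf hd hb⟩

end Field

end Polynomial

/-- `ℂ[x] = ℂ[f]·1 ⊕ ⋯ ⊕ ℂ[f]·x^{d−2} ⊕ f'·ℂ[f]`: every `p ∈ ℂ[x]` is uniquely
`p = Σ_{i≤d−2} q_i(f)·x^i + q(f)·f'`. -/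
theorem brieskorn_decomposition_one_var (f : Polynomial ℂ) (d : ℕ) (hd : 2 ≤ d)
    (hdeg : f.natDegree = d) (p : Polynomial ℂ) :
    ∃! qr : (Fin (d - 1) → Polynomial ℂ) × Polynomial ℂ,
      p = (∑ i, (qr.1 i).comp f * X ^ (i : ℕ)) + (qr.2).comp f * derivative f := by
  obtain ⟨m, rfl⟩ : ∃ m, d = m + 1 := ⟨d - 1, by omega⟩
  let b : Fin (m + 1) → ℂ[X] := Fin.snoc (fun i : Fin m => X ^ (i : ℕ)) (derivative f)
  have hb : ∀ i, (b i).degree = i :=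
    Fin.lastCases (by simp [b, degree_derivative, hdeg, Nat.cast_withBot])
      fun i => by simp [b, Nat.cast_withBot]
  have hbij : Function.Bijective fun qr : (Fin m → ℂ[X]) × ℂ[X] =>
      (∑ i, (qr.1 i).comp f * X ^ (i : ℕ)) + qr.2.comp f * derivative f := by
    convert (sumCompMul_bijective hdeg m.succ_pos hb).comp
      ((Equiv.prodComm _ _).trans (Fin.snocEquiv fun _ => ℂ[X])).bijective using 1
    funext qr
    exact (sumCompMul_snoc f _ _ qr.1 qr.2).symm
  obtain ⟨qr, hqr, huniq⟩ := hbij.existsUnique p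
  exact ⟨qr, hqr.symm, fun qr' h => huniq qr' h.symm⟩
end
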